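/- Fix positive integers k and n and set partitions P_1, P_2 of Fin k ⊕ Fin k. Let A = Fin k ⊕ Fin k ⊕ Fin k with three layers (top, middle, bottom), embed P_1 into the top-and-middle layers and P_2 into the middle-and-bottom layers, and let R be the finest equivalence relation on A containing both embedded relations (i.e., generated by: inl a ~ inl b and inl a ~ inr (inl b) etc. according to P_1 relating elements of the first two layers, and P_2 relating elements of the last two layers, with the primed vertices of P_1 identified with the unprimed vertices of P_2 in the middle layer). Let c(P_1, P_2) be the number of equivalence classes of R contained entirely in the middle layer, and let P_3 be the set partition of Fin k ⊕ Fin k obtained by restricting R to the top and bottom layers. Then T_{P_1} ∘ T_{P_2} = n^{c(P_1,P_2)} • T_{P_3} as endomorphisms of W_{k,n}. (The map Φ_{k,n} from the partition algebra Par_k(n) to End(W_{k,n}) is an algebra map.) -/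

import Mathlib

/-!
Formalization of statements from "Stable characters from permutation patterns"
by C. Gaetz and C. Ryba.

The `(J, L)` entry of `T_{P₁} T_{P₂}` is `∑_I C_{P₁}(J, I) C_{P₂}(I, L)`, the number of middle
words `I` for which the three-layer labelling `(J, I, L)` is constant on the classes of the glued
relation. Such labellings are the functions on the set of classes whose values on the classes
meeting the top or bottom layer are prescribed by `(J, L)`. They exist iff `(J, L)` is constant on
the parts of `P₃`, and then the values on the `c(P₁, P₂)` classes inside the middle layer are free.
-/

open scoped Classical

noncomputable section

/-- A word `I` (with values in a linear order `M`) is `σ`-sorted: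
`I a < I b` if and only if `σ a < σ b`. -/
def IsSorted {k : ℕ} {M : Type*} [LinearOrder M] (σ : Fin k → Fin k) (I : Fin k → M) : Prop :=
  ∀ a b : Fin k, I a < I b ↔ σ a < σ b

/-- `N_σ(g)`: the number of strictly increasing words `I : Fin k → Fin n` such that
`g ∘ I` is `σ`-sorted, i.e. the number of occurrences of the pattern `σ` in `g`. -/
def patCount (k n : ℕ) (σ : Fin k → Fin k) (g : Equiv.Perm (Fin n)) : ℕ :=
  Nat.card {I : Fin k → Fin n // StrictMono I ∧ IsSorted σ (⇑g ∘ I)}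

/-- `m_i(g)`: the number of cycles of length `i` in the cycle decomposition of `g`,
where fixed points count as cycles of length 1. -/
def cycleCount {n : ℕ} (g : Equiv.Perm (Fin n)) (i : ℕ) : ℕ :=
  if i = 1 then Nat.card {x : Fin n // g x = x} else Multiset.count i g.cycleType

/-- `W k n`: the space of `ℂ`-valued functions on words, a model of the `k`-th tensor power
of the permutation representation of `S_n`. -/
abbrev W (k n : ℕ) := (Fin k → Fin n) → ℂ

/-- The labelling `ℓ_{J,I}` of `Fin k ⊕ Fin k` determined by the words `J` and `I`:
unprimed vertices (`inl`) get labels from `J`, primed vertices (`inr`) from `I`. -/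
def label {k n : ℕ} (J I : Fin k → Fin n) : Fin k ⊕ Fin k → Fin n := Sum.elim J I

/-- `C_P(J, I)`: equal to `1` if the labelling `ℓ_{J,I}` is constant on every part of the
set partition `P` (i.e. every part is monochromatic), and `0` otherwise. -/
def CP {k n : ℕ} (P : Setoid (Fin k ⊕ Fin k)) (J I : Fin k → Fin n) : ℂ :=
  if ∀ a b, P.r a b → label J I a = label J I b then 1 else 0

/-- `C'_P(J, I)`: equal to `1` if the labelling `ℓ_{J,I}` is constant on every part of `P`
and takes distinct values on distinct parts of `P`, and `0` otherwise. -/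
def CP' {k n : ℕ} (P : Setoid (Fin k ⊕ Fin k)) (J I : Fin k → Fin n) : ℂ :=
  if (∀ a b, P.r a b → label J I a = label J I b) ∧
      (∀ a b, ¬ P.r a b → label J I a ≠ label J I b) then 1 else 0

/-- The operator `T_P : W_{k,n} → W_{k,n}`, `(T_P f)(J) = Σ_I C_P(J,I) f(I)`. -/
def TP (k n : ℕ) (P : Setoid (Fin k ⊕ Fin k)) : W k n →ₗ[ℂ] W k n :=
  Matrix.mulVecLin (Matrix.of fun J I => CP P J I)

/-- The operator `T'_P : W_{k,n} → W_{k,n}`, `(T'_P f)(J) = Σ_I C'_P(J,I) f(I)`. -/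
def TP' (k n : ℕ) (P : Setoid (Fin k ⊕ Fin k)) : W k n →ₗ[ℂ] W k n :=
  Matrix.mulVecLin (Matrix.of fun J I => CP' P J I)

/-- The action `ρ(g)` of `S_n` on `W k n`: `(ρ(g) f)(I) = f(g⁻¹ ∘ I)`. -/
def rho (k n : ℕ) (g : Equiv.Perm (Fin n)) : W k n →ₗ[ℂ] W k n where
  toFun f := fun I => f (⇑g⁻¹ ∘ I)
  map_add' _ _ := rfl
  map_smul' _ _ := rfl

/-- The map `E_σ : ℂ → W_{k,n}` sending `1` to the sum of `v_I` over `σ`-sorted words `I`. -/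
def Esig (k n : ℕ) (σ : Fin k → Fin k) : ℂ →ₗ[ℂ] W k n where
  toFun c := fun I => if IsSorted σ I then c else 0
  map_add' a b := by
    funext I; by_cases h : IsSorted σ I <;> simp [h]
  map_smul' a b := by
    funext I; by_cases h : IsSorted σ I <;> simp [h]

/-- The transpose map `E_σ^T : W_{k,n} → ℂ`, `f ↦ Σ_{I σ-sorted} f(I)`. -/
def EsigT (k n : ℕ) (σ : Fin k → Fin k) : W k n →ₗ[ℂ] ℂ where
  toFun f := ∑ I ∈ Finset.univ.filter (fun I : Fin k → Fin n => IsSorted σ I), f I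
  map_add' f g := Finset.sum_add_distrib
  map_smul' c f := by simp [Finset.mul_sum]

/-- There are finitely many set partitions (equivalence relations) on a finite type. -/
noncomputable instance {α : Type*} [Finite α] : Fintype (Setoid α) := by
  have : Finite (Setoid α) :=
    Finite.of_injective (fun s : Setoid α => s.r)
      (fun s t h => by cases s; cases t; cases h; rfl)
  exact Fintype.ofFinite _

/-- Embedding of a `(k,k)`-set partition into the top and middle layers of the
three-layer set `Fin k ⊕ (Fin k ⊕ Fin k)`: unprimed vertices go to the top layer,
primed vertices to the middle layer. -/
def embedTopMid (k : ℕ) : Fin k ⊕ Fin k → Fin k ⊕ (Fin k ⊕ Fin k) :=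
  Sum.elim (fun a => Sum.inl a) (fun a => Sum.inr (Sum.inl a))

/-- Embedding of a `(k,k)`-set partition into the middle and bottom layers:
unprimed vertices go to the middle layer, primed vertices to the bottom layer. -/
def embedMidBot (k : ℕ) : Fin k ⊕ Fin k → Fin k ⊕ (Fin k ⊕ Fin k) :=
  Sum.elim (fun a => Sum.inr (Sum.inl a)) (fun a => Sum.inr (Sum.inr a))

/-- Embedding of the top and bottom layers into the three-layer set. -/
def embedTopBot (k : ℕ) : Fin k ⊕ Fin k → Fin k ⊕ (Fin k ⊕ Fin k) :=
  Sum.elim (fun a => Sum.inl a) (fun a => Sum.inr (Sum.inr a))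

/-- The finest equivalence relation on the three-layer set `Fin k ⊕ (Fin k ⊕ Fin k)`
containing `P₁` embedded in the top-and-middle layers and `P₂` embedded in the
middle-and-bottom layers. -/
def glue (k : ℕ) (P₁ P₂ : Setoid (Fin k ⊕ Fin k)) : Setoid (Fin k ⊕ (Fin k ⊕ Fin k)) :=
  Relation.EqvGen.setoid (fun a b =>
    (∃ x y, P₁.r x y ∧ a = embedTopMid k x ∧ b = embedTopMid k y) ∨
    (∃ x y, P₂.r x y ∧ a = embedMidBot k x ∧ b = embedMidBot k y))

/-- `c(P₁, P₂)`: the number of equivalence classes of the glued relation lying entirely in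
the middle layer. -/
def midComponents (k : ℕ) (P₁ P₂ : Setoid (Fin k ⊕ Fin k)) : ℕ :=
  Nat.card {c : Quotient (glue k P₁ P₂) //
    ∀ a, Quotient.mk (glue k P₁ P₂) a = c → ∃ x : Fin k, a = Sum.inr (Sum.inl x)}

/-- `P₃ = P₁ ∘ P₂`: the set partition of `Fin k ⊕ Fin k` obtained by restricting the glued
relation to the top and bottom layers. -/
def partComp (k : ℕ) (P₁ P₂ : Setoid (Fin k ⊕ Fin k)) : Setoid (Fin k ⊕ Fin k) :=
  Setoid.comap (embedTopBot k) (glue k P₁ P₂)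

section Extensions

variable {α β γ Q : Type*}

theorem card_subtype_comp_eq [Finite Q] (q : γ → Q) (g : γ → β)
    (hg : ∀ c c', q c = q c' → g c = g c') :
    Nat.card {φ : Q → β // φ ∘ q = g} = Nat.card β ^ Nat.card {x // x ∉ Set.range q} := by
  let g' : Set.range q → β := fun x => g x.2.choose
  have hcomp (φ : Q → β) : φ ∘ q = g ↔ φ ∘ Subtype.val = g' := by
    constructor
    · rintro rfl
      funext x
      exact congrArg φ x.2.choose_spec.symm
    · intro h
      funext c
      have hc : q (Set.mem_range_self (f := q) c).choose = q c :=
        (Set.mem_range_self c).choose_spec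
      simpa [g', hg _ _ hc] using congrFun h ⟨q c, Set.mem_range_self c⟩
  rw [Nat.card_congr ((Equiv.subtypeEquivRight hcomp).trans (Equiv.subtypePreimage _ g')),
    Nat.card_fun]

theorem card_le_ker_and_comp_eq [Finite α] (s : Setoid α) (e : γ → α) (g : γ → β) :
    Nat.card {f : α → β // s ≤ Setoid.ker f ∧ f ∘ e = g} =
      if s.comap e ≤ Setoid.ker g then
        Nat.card β ^ Nat.card {x : Quotient s // x ∉ Set.range (Quotient.mk s ∘ e)}
      else 0 := by
  split_ifs with hg
  · rw [← card_subtype_comp_eq (Quotient.mk s ∘ e) g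
      fun _ _ h => hg (Quotient.exact (s := s) h)]
    exact Nat.card_congr ((Equiv.subtypeSubtypeEquivSubtypeInter _ _).symm.trans
      (Equiv.subtypeEquiv (Setoid.liftEquiv s) fun f => Iff.rfl))
  · have : IsEmpty {f : α → β // s ≤ Setoid.ker f ∧ f ∘ e = g} :=
      ⟨fun f => hg fun a b hab => by rw [Setoid.ker_def, ← f.2.2]; exact f.2.1 hab⟩
    exact Nat.card_of_isEmpty

end Extensions

section ThreeLayers

variable {k n : ℕ}

def label3 (J I L : Fin k → Fin n) : Fin k ⊕ (Fin k ⊕ Fin k) → Fin n :=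
  Sum.elim J (Sum.elim I L)

theorem label3_comp_embedTopMid (J I L : Fin k → Fin n) :
    label3 J I L ∘ embedTopMid k = label J I := by
  funext x; cases x <;> rfl

theorem label3_comp_embedMidBot (J I L : Fin k → Fin n) :
    label3 J I L ∘ embedMidBot k = label I L := by
  funext x; cases x <;> rfl

theorem label3_comp_embedTopBot (J I L : Fin k → Fin n) :
    label3 J I L ∘ embedTopBot k = label J L := by
  funext x; cases x <;> rfl

theorem label3_eq_self_of_comp_embedTopBot {J L : Fin k → Fin n}
    {f : Fin k ⊕ (Fin k ⊕ Fin k) → Fin n} (hf : f ∘ embedTopBot k = label J L) : label3 J (f ∘ Sum.inr ∘ Sum.inl) L = f := by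
  funext a
  rcases a with x | x | x
  exacts [(congrFun hf (Sum.inl x)).symm, rfl, (congrFun hf (Sum.inr x)).symm]

theorem glue_le_ker_iff (P₁ P₂ : Setoid (Fin k ⊕ Fin k)) (f : Fin k ⊕ (Fin k ⊕ Fin k) → Fin n) :
    glue k P₁ P₂ ≤ Setoid.ker f ↔
      P₁ ≤ Setoid.ker (f ∘ embedTopMid k) ∧ P₂ ≤ Setoid.ker (f ∘ embedMidBot k) := by
  constructor
  · intro h
    exact ⟨fun x y hxy => h (.rel _ _ (.inl ⟨x, y, hxy, rfl, rfl⟩)),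
      fun x y hxy => h (.rel _ _ (.inr ⟨x, y, hxy, rfl, rfl⟩))⟩
  · rintro ⟨h₁, h₂⟩
    refine Setoid.eqvGen_le ?_
    rintro _ _ (⟨x, y, hxy, rfl, rfl⟩ | ⟨x, y, hxy, rfl, rfl⟩)
    exacts [h₁ hxy, h₂ hxy]

theorem CP_eq_ite (P : Setoid (Fin k ⊕ Fin k)) (J I : Fin k → Fin n) :
    CP P J I = if P ≤ Setoid.ker (label J I) then 1 else 0 :=
  if_congr Iff.rfl rfl rfl

theorem CP_mul_CP (P₁ P₂ : Setoid (Fin k ⊕ Fin k)) (J I L : Fin k → Fin n) :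
    CP P₁ J I * CP P₂ I L = if glue k P₁ P₂ ≤ Setoid.ker (label3 J I L) then 1 else 0 := by
  rw [CP_eq_ite, CP_eq_ite, boole_mul, ← ite_and, glue_le_ker_iff, label3_comp_embedTopMid,
    label3_comp_embedMidBot]
  -- the two sides differ only in their `Decidable` instances
  congr

def middleWordEquiv (P₁ P₂ : Setoid (Fin k ⊕ Fin k)) (J L : Fin k → Fin n) :
    {I : Fin k → Fin n // glue k P₁ P₂ ≤ Setoid.ker (label3 J I L)} ≃
      {f : Fin k ⊕ (Fin k ⊕ Fin k) → Fin n //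
        glue k P₁ P₂ ≤ Setoid.ker f ∧ f ∘ embedTopBot k = label J L} where
  toFun I := ⟨label3 J I L, I.2, label3_comp_embedTopBot J I L⟩
  invFun f := ⟨f.1 ∘ Sum.inr ∘ Sum.inl, by
    rw [label3_eq_self_of_comp_embedTopBot f.2.2]; exact f.2.1⟩
  left_inv _ := rfl
  right_inv f := Subtype.ext (label3_eq_self_of_comp_embedTopBot f.2.2)

theorem midComponents_eq (P₁ P₂ : Setoid (Fin k ⊕ Fin k)) :
    midComponents k P₁ P₂ = Nat.card {c : Quotient (glue k P₁ P₂) //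
      c ∉ Set.range (Quotient.mk (glue k P₁ P₂) ∘ embedTopBot k)} := by
  refine Nat.card_congr (Equiv.subtypeEquivRight fun c => ⟨?_, ?_⟩)
  · rintro h ⟨y, rfl⟩
    obtain ⟨x, hx⟩ := h _ rfl
    cases y <;> simp [embedTopBot] at hx
  · rintro h (x | x | x) rfl
    exacts [(h ⟨.inl x, rfl⟩).elim, ⟨x, rfl⟩, (h ⟨.inr x, rfl⟩).elim]

theorem sum_CP_mul_CP (P₁ P₂ : Setoid (Fin k ⊕ Fin k)) (J L : Fin k → Fin n) :
    ∑ I, CP P₁ J I * CP P₂ I L = (n : ℂ) ^ midComponents k P₁ P₂ * CP (partComp k P₁ P₂) J L := by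
  calc ∑ I, CP P₁ J I * CP P₂ I L
      = Nat.card {I : Fin k → Fin n // glue k P₁ P₂ ≤ Setoid.ker (label3 J I L)} := by
        simp only [CP_mul_CP, Finset.sum_boole, Nat.card_eq_fintype_card, Fintype.card_subtype]
    _ = Nat.card {f : Fin k ⊕ (Fin k ⊕ Fin k) → Fin n //
          glue k P₁ P₂ ≤ Setoid.ker f ∧ f ∘ embedTopBot k = label J L} :=
        congrArg _ (Nat.card_congr (middleWordEquiv P₁ P₂ J L))
    _ = (n : ℂ) ^ midComponents k P₁ P₂ * CP (partComp k P₁ P₂) J L := by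
        rw [card_le_ker_and_comp_eq, CP_eq_ite, midComponents_eq, Nat.card_fin, partComp]
        split_ifs <;> simp

end ThreeLayers

theorem TP_comp_general (k n : ℕ) (P₁ P₂ : Setoid (Fin k ⊕ Fin k)) :
    (TP k n P₁) ∘ₗ (TP k n P₂) =
      (n : ℂ) ^ (midComponents k P₁ P₂) • TP k n (partComp k P₁ P₂) := by
  have hM : (Matrix.of fun J I : Fin k → Fin n => CP P₁ J I) * Matrix.of (fun I L => CP P₂ I L)
      = (n : ℂ) ^ midComponents k P₁ P₂ • Matrix.of fun J L => CP (partComp k P₁ P₂) J L := by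
    ext J L
    simp only [Matrix.mul_apply, Matrix.of_apply, Matrix.smul_apply, smul_eq_mul, sum_CP_mul_CP]
  rw [TP, TP, TP, ← Matrix.mulVecLin_mul, hM]
  exact LinearMap.ext fun f => Matrix.smul_mulVec _ _ f

/-- `T_{P₁} ∘ T_{P₂} = n^{c(P₁,P₂)} • T_{P₃}` (`Φ_{k,n}` is an algebra
map). -/
theorem TP_comp (k n : ℕ) (hk : 0 < k) (hn : 0 < n) (P₁ P₂ : Setoid (Fin k ⊕ Fin k)) :
    (TP k n P₁) ∘ₗ (TP k n P₂) =
      (n : ℂ) ^ (midComponents k P₁ P₂) • TP k n (partComp k P₁ P₂) :=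
  TP_comp_general k n P₁ P₂
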